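/- Let n ≥ 1, let ⟨z,w⟩_{n,1} = z₁w̄₁ + ⋯ + zₙw̄ₙ − z_{n+1}w̄_{n+1} on ℂ^{n+1}, let 𝔹ⁿ be the open unit ball of ℂⁿ, and for a nonzero vector z ∈ ℂ^{n+1} let [z] ∈ ℙⁿ denote the complex line it spans. The map from 𝔹ⁿ × ℂⁿ to ℙⁿ × ℙⁿ sending (u, v) to the pair ([(u₁,…,uₙ,1)], [(v̄₁,…,v̄ₙ, 1 + ū₁v̄₁ + ⋯ + ūₙv̄ₙ)]) is a bijection onto the set W₁,₁ = {([z],[w]) ∈ ℙⁿ × ℙⁿ : ⟨z,w⟩_{n,1} ≠ 0 and ⟨z,z⟩_{n,1} < 0}. -/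

import Mathlib

/-- The hermitian form `⟨z,w⟩_{n,1} = z₁w̄₁ + ⋯ + zₙw̄ₙ − z_{n+1}w̄_{n+1}` on `ℂ^{n+1}`. -/
noncomputable def hermForm (n : ℕ) (z w : Fin (n + 1) → ℂ) : ℂ :=
  (∑ i : Fin n, z i.castSucc * starRingEnd ℂ (w i.castSucc)) -
    z (Fin.last n) * starRingEnd ℂ (w (Fin.last n))

/-- The vector `(u₁, …, uₙ, 1)`. -/
def vecZ (n : ℕ) (u : Fin n → ℂ) : Fin (n + 1) → ℂ := Fin.snoc u 1

/-- The vector `(v̄₁, …, v̄ₙ, 1 + ū₁v̄₁ + ⋯ + ūₙv̄ₙ)`. -/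
noncomputable def vecW (n : ℕ) (u v : Fin n → ℂ) : Fin (n + 1) → ℂ :=
  Fin.snoc (fun i => starRingEnd ℂ (v i))
    (1 + ∑ i : Fin n, starRingEnd ℂ (u i) * starRingEnd ℂ (v i))

lemma vecZ_ne_zero (n : ℕ) (u : Fin n → ℂ) : vecZ n u ≠ 0 := by
  intro h
  simpa [vecZ] using congrFun h (Fin.last n)

lemma vecW_ne_zero (n : ℕ) (u v : Fin n → ℂ) : vecW n u v ≠ 0 := by
  intro h
  by_cases hv : v = 0
  · have := congrFun h (Fin.last n)
    simp [vecW, hv] at this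
  · obtain ⟨i, hi⟩ := Function.ne_iff.mp hv
    have := congrFun h i.castSucc
    simp [vecW] at this
    exact hi (by simpa using this)

/-- The map `𝔹ⁿ × ℂⁿ → ℙⁿ × ℙⁿ`,
`(u,v) ↦ ([(u,1)], [(v̄, 1 + ū·v̄)])`. -/
noncomputable def F₁₁ (n : ℕ) :
    EuclideanSpace ℂ (Fin n) × EuclideanSpace ℂ (Fin n) →
      Projectivization ℂ (Fin (n + 1) → ℂ) × Projectivization ℂ (Fin (n + 1) → ℂ) :=
  fun p =>
    (Projectivization.mk ℂ (vecZ n p.1) (vecZ_ne_zero n p.1),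
     Projectivization.mk ℂ (vecW n p.1 p.2) (vecW_ne_zero n p.1 p.2))

/-- The domain `W₁,₁ = {([z],[w]) : ⟨z,w⟩_{n,1} ≠ 0 and ⟨z,z⟩_{n,1} < 0}` in `ℙⁿ × ℙⁿ`. -/
def W₁₁ (n : ℕ) :
    Set (Projectivization ℂ (Fin (n + 1) → ℂ) × Projectivization ℂ (Fin (n + 1) → ℂ)) :=
  {P | ∃ (z w : Fin (n + 1) → ℂ) (hz : z ≠ 0) (hw : w ≠ 0),
    P = (Projectivization.mk ℂ z hz, Projectivization.mk ℂ w hw) ∧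
    hermForm n z w ≠ 0 ∧ (hermForm n z z).re < 0}


/-! Normalising the last coordinate of `z` to `1` identifies `[z]` with a point `u` of `ℂⁿ`, and
`⟨z,z⟩_{n,1} < 0` says exactly that `u ∈ 𝔹ⁿ` (the last coordinate of such a `z` cannot vanish).
For fixed `u`, normalising `⟨(u,1),w⟩_{n,1}` to `-1` picks a unique representative of `[w]`,
and a vector `w` with `⟨(u,1),w⟩_{n,1} = -1` is determined by its first `n` coordinates `v̄`:
it is `(v̄, 1 + ū·v̄)`. -/

open ComplexConjugate

section HermForm

variable {n : ℕ}

lemma hermForm_smul_left (a : ℂ) (z w : Fin (n + 1) → ℂ) :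
    hermForm n (a • z) w = a * hermForm n z w := by
  simp [hermForm, Finset.mul_sum, mul_assoc, mul_sub]

lemma hermForm_smul_right (a : ℂ) (z w : Fin (n + 1) → ℂ) :
    hermForm n z (a • w) = conj a * hermForm n z w := by
  simp [hermForm, Finset.mul_sum, mul_left_comm, mul_sub]

lemma hermForm_self_eq (z : Fin (n + 1) → ℂ) :
    hermForm n z z =
      ((∑ i : Fin n, Complex.normSq (z i.castSucc) - Complex.normSq (z (Fin.last n)) : ℝ) : ℂ) := by
  simp [hermForm, Complex.mul_conj]

lemma last_ne_zero_of_hermForm_self_re_neg {z : Fin (n + 1) → ℂ}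
    (hz : (hermForm n z z).re < 0) : z (Fin.last n) ≠ 0 := by
  intro h
  rw [hermForm_self_eq, Complex.ofReal_re, h, map_zero, sub_zero] at hz
  exact hz.not_ge (Finset.sum_nonneg fun i _ => Complex.normSq_nonneg _)

lemma hermForm_vecZ_self (u : Fin n → ℂ) :
    hermForm n (vecZ n u) (vecZ n u) = ((∑ i, Complex.normSq (u i) - 1 : ℝ) : ℂ) := by
  simp [hermForm_self_eq, vecZ]

lemma hermForm_vecZ_vecW (u v : Fin n → ℂ) : hermForm n (vecZ n u) (vecW n u v) = -1 := by
  simp [hermForm, vecZ, vecW, map_sum]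

lemma eq_vecW_of_hermForm_vecZ_eq_neg_one {u : Fin n → ℂ} {w : Fin (n + 1) → ℂ}
    (h : hermForm n (vecZ n u) w = -1) : w = vecW n u fun i => conj (w i.castSucc) := by
  have hlast : w (Fin.last n) = 1 + ∑ i, conj (u i) * w i.castSucc := by
    have h' := congrArg conj h
    simp only [hermForm, vecZ, Fin.snoc_castSucc, Fin.snoc_last, map_sub, map_sum, map_mul,
      Complex.conj_conj, map_one, one_mul, map_neg] at h'
    linear_combination -h'
  funext j
  refine Fin.lastCases ?_ (fun i => ?_) j
  · simp [vecW, hlast]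
  · simp [vecW]

lemma smul_eq_vecZ {z : Fin (n + 1) → ℂ} (hz : z (Fin.last n) ≠ 0) :
    (z (Fin.last n))⁻¹ • z = vecZ n fun i => (z (Fin.last n))⁻¹ * z i.castSucc := by
  funext j
  refine Fin.lastCases ?_ (fun i => ?_) j
  · simp [vecZ, inv_mul_cancel₀ hz]
  · simp [vecZ]

end HermForm

section Map

variable {n : ℕ}

lemma mem_ball_zero_one_iff_sum_normSq_lt (u : EuclideanSpace ℂ (Fin n)) :
    u ∈ Metric.ball (0 : EuclideanSpace ℂ (Fin n)) 1 ↔ ∑ i, Complex.normSq (u i) < 1 := by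
  rw [mem_ball_zero_iff, ← sq_lt_one_iff₀ (norm_nonneg u), EuclideanSpace.norm_sq_eq]
  simp [Complex.sq_norm]

lemma eq_of_mk_vecZ_eq {u u' : Fin n → ℂ}
    (h : Projectivization.mk ℂ (vecZ n u) (vecZ_ne_zero n u) =
      Projectivization.mk ℂ (vecZ n u') (vecZ_ne_zero n u')) : u = u' := by
  obtain ⟨a, ha⟩ := (Projectivization.mk_eq_mk_iff' ℂ _ _ _ _).1 h
  have ha1 : a = 1 := by simpa [vecZ] using congrFun ha (Fin.last n)
  subst ha1
  simp only [one_smul] at ha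
  funext i
  simpa [vecZ] using congrFun ha.symm i.castSucc

lemma eq_of_mk_vecW_eq {u v v' : Fin n → ℂ}
    (h : Projectivization.mk ℂ (vecW n u v) (vecW_ne_zero n u v) =
      Projectivization.mk ℂ (vecW n u v') (vecW_ne_zero n u v')) : v = v' := by
  obtain ⟨b, hb⟩ := (Projectivization.mk_eq_mk_iff' ℂ _ _ _ _).1 h
  -- Pairing both sides with `(u,1)` gives `-conj b = -1`.
  have hb1 : b = 1 := by
    have := congrArg (hermForm n (vecZ n u)) hb
    rw [hermForm_smul_right, hermForm_vecZ_vecW, hermForm_vecZ_vecW] at this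
    exact (starRingEnd ℂ).injective (by simpa using this)
  subst hb1
  simp only [one_smul] at hb
  funext i
  exact (starRingEnd ℂ).injective (by simpa [vecW] using congrFun hb.symm i.castSucc)

lemma F₁₁_injective : Function.Injective (F₁₁ n) := by
  rintro ⟨u, v⟩ ⟨u', v'⟩ h
  obtain ⟨hz, hw⟩ := Prod.ext_iff.1 h
  obtain rfl : u = u' := WithLp.ofLp_injective 2 (eq_of_mk_vecZ_eq hz)
  obtain rfl : v = v' := WithLp.ofLp_injective 2 (eq_of_mk_vecW_eq hw)
  rfl

lemma F₁₁_mapsTo :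
    Set.MapsTo (F₁₁ n) (Metric.ball 0 1 ×ˢ Set.univ) (W₁₁ n) := by
  rintro ⟨u, v⟩ ⟨hu, -⟩
  refine ⟨_, _, vecZ_ne_zero n u, vecW_ne_zero n u v, rfl, ?_, ?_⟩
  · simp [hermForm_vecZ_vecW]
  · rw [hermForm_vecZ_self, Complex.ofReal_re, sub_neg]
    exact (mem_ball_zero_one_iff_sum_normSq_lt u).1 hu

lemma F₁₁_surjOn :
    Set.SurjOn (F₁₁ n) (Metric.ball 0 1 ×ˢ Set.univ) (W₁₁ n) := by
  rintro _ ⟨z, w, hz, hw, rfl, hzw, hzz⟩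
  have hlast := last_ne_zero_of_hermForm_self_re_neg hzz
  set a := (z (Fin.last n))⁻¹
  set u : EuclideanSpace ℂ (Fin n) := WithLp.toLp 2 fun i => a * z i.castSucc
  have ha : a ≠ 0 := inv_ne_zero hlast
  have hzu : a • z = vecZ n u := smul_eq_vecZ hlast
  have hu : u ∈ Metric.ball 0 1 := by
    have h : (hermForm n (vecZ n u) (vecZ n u)).re < 0 := by
      rw [← hzu, hermForm_smul_left, hermForm_smul_right, ← mul_assoc, Complex.mul_conj,
        Complex.re_ofReal_mul]
      exact mul_neg_of_pos_of_neg (Complex.normSq_pos.2 ha) hzz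
    rw [hermForm_vecZ_self, Complex.ofReal_re, sub_neg] at h
    exact (mem_ball_zero_one_iff_sum_normSq_lt u).2 h
  have hc : hermForm n (vecZ n u) w ≠ 0 := by
    rw [← hzu, hermForm_smul_left]
    exact mul_ne_zero ha hzw
  set b := -(conj (hermForm n (vecZ n u) w))⁻¹
  have hb : hermForm n (vecZ n u) (b • w) = -1 := by
    rw [hermForm_smul_right]
    simp [b, hc]
  set v : EuclideanSpace ℂ (Fin n) := WithLp.toLp 2 fun i => conj ((b • w) i.castSucc)
  have hwv : b • w = vecW n u v := eq_vecW_of_hermForm_vecZ_eq_neg_one hb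
  refine ⟨(u, v), ⟨hu, trivial⟩, Prod.ext ?_ ?_⟩
  · exact (Projectivization.mk_eq_mk_iff' ℂ _ _ _ _).2 ⟨a, hzu⟩
  · exact (Projectivization.mk_eq_mk_iff' ℂ _ _ _ _).2 ⟨b, hwv⟩

end Map

theorem stmt_12_general (n : ℕ) :
    Set.BijOn (F₁₁ n)
      (Metric.ball (0 : EuclideanSpace ℂ (Fin n)) 1 ×ˢ
        (Set.univ : Set (EuclideanSpace ℂ (Fin n))))
      (W₁₁ n) :=
  ⟨F₁₁_mapsTo, F₁₁_injective.injOn, F₁₁_surjOn⟩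

/-- Example 6.3: `(u,v) ↦ ([(u,1)], [(v̄, 1 + ū·v̄)])` is a bijection from `𝔹ⁿ × ℂⁿ`
onto `W₁,₁`. -/
theorem stmt_12 (n : ℕ) (hn : 1 ≤ n) :
    Set.BijOn (F₁₁ n)
      (Metric.ball (0 : EuclideanSpace ℂ (Fin n)) 1 ×ˢ
        (Set.univ : Set (EuclideanSpace ℂ (Fin n))))
      (W₁₁ n) :=
  stmt_12_general n
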